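/- arXiv:0903.0052 — 6 statements merged into one kernel-verified Lean document; each statement's English description precedes it below -/
import Mathlib

section
/- Let A be an integral domain and a a nonzero element of A. A subring R with A ⊆ R ⊆ A[a⁻¹] exists if and only if R = ⋃_{n≥0} a⁻ⁿ·Iₙ for some a-filtration (Iₙ) of A, i.e., a descending chain A = I₀ ⊇ I₁ ⊇ I₂ ⊇ ⋯ of ideals with Iₙ·Iₘ ⊆ I_{n+m} and a·Iₙ ⊆ I_{n+1} for all n, m. -/
/-!
A subalgebra `S` of `A[a⁻¹]` is recovered from the ideals `Iₙ = A ∩ aⁿS`: every element of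
`A[a⁻¹]` has the form `y / aⁿ`, and it lies in `S` exactly when `y ∈ Iₙ`. Conversely, for an
`a`-filtration the set `⋃ₙ a⁻ⁿIₙ` is closed under products because `IₙIₘ ⊆ I_{n+m}`, and
under sums because `y/aⁿ + z/aᵐ = (aᵐy + aⁿz)/a^{n+m}` with `aᵐIₙ ⊆ I_{n+m}`.
-/

section

open Pointwise

variable {A : Type*} [CommRing A]

structure IsAwayFiltration (a : A) (I : ℕ → Ideal A) : Prop where
  zero_eq_top : I 0 = ⊤
  succ_le : ∀ n, I (n + 1) ≤ I n
  mul_le : ∀ n m, I n * I m ≤ I (n + m)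
  mul_mem : ∀ n, ∀ x ∈ I n, a * x ∈ I (n + 1)

/-- The set `⋃ₙ a⁻ⁿ Iₙ` inside an `A`-algebra `B`. -/
def awayUnion (B : Type*) [CommRing B] [Algebra A B] (a : A) (I : ℕ → Ideal A) : Set B :=
  {x | ∃ n : ℕ, ∃ y ∈ I n, algebraMap A B a ^ n * x = algebraMap A B y}

namespace IsAwayFiltration

variable {a : A} {I : ℕ → Ideal A}

theorem pow_mul_mem (hI : IsAwayFiltration a I) (m : ℕ) {n : ℕ} {y : A} (hy : y ∈ I n) :
    a ^ m * y ∈ I (n + m) := by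
  induction m with
  | zero => simpa using hy
  | succ m ih => simpa [pow_succ', mul_assoc, ← add_assoc] using hI.mul_mem _ _ ih

def toSubalgebra (hI : IsAwayFiltration a I) (B : Type*) [CommRing B] [Algebra A B] :
    Subalgebra A B where
  carrier := awayUnion B a I
  algebraMap_mem' c := ⟨0, c, by simp [hI.zero_eq_top], by simp⟩
  mul_mem' := by
    rintro x x' ⟨n, y, hy, hxy⟩ ⟨m, z, hz, hxz⟩
    exact ⟨n + m, y * z, hI.mul_le n m (Ideal.mul_mem_mul hy hz),
      by rw [map_mul, ← hxy, ← hxz]; ring⟩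
  add_mem' := by
    rintro x x' ⟨n, y, hy, hxy⟩ ⟨m, z, hz, hxz⟩
    refine ⟨n + m, a ^ m * y + a ^ n * z,
      add_mem (hI.pow_mul_mem m hy) (add_comm m n ▸ hI.pow_mul_mem n hz), ?_⟩
    simp only [map_add, map_mul, map_pow, ← hxy, ← hxz]
    ring

end IsAwayFiltration

namespace Subalgebra

variable {B : Type*} [CommRing B] [Algebra A B]

def awayFiltration (S : Subalgebra A B) (a : A) (n : ℕ) : Ideal A :=
  Submodule.comap (Algebra.linearMap A B) (algebraMap A B a ^ n • Subalgebra.toSubmodule S)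

variable {S : Subalgebra A B} {a : A}

theorem mem_awayFiltration {n : ℕ} {y : A} :
    y ∈ S.awayFiltration a n ↔ ∃ x ∈ S, algebraMap A B a ^ n * x = algebraMap A B y := by
  simp [awayFiltration, Submodule.mem_smul_pointwise_iff_exists]

theorem isAwayFiltration_awayFiltration (S : Subalgebra A B) (a : A) :
    IsAwayFiltration a (S.awayFiltration a) where
  zero_eq_top := eq_top_iff.mpr fun y _ =>
    mem_awayFiltration.mpr ⟨_, S.algebraMap_mem y, by simp⟩
  succ_le n y hy := by
    obtain ⟨x, hx, hxy⟩ := mem_awayFiltration.mp hy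
    exact mem_awayFiltration.mpr ⟨_, S.mul_mem (S.algebraMap_mem a) hx, by rw [← hxy]; ring⟩
  mul_le n m := Ideal.mul_le.mpr fun y hy z hz => by
    obtain ⟨x, hx, hxy⟩ := mem_awayFiltration.mp hy
    obtain ⟨w, hw, hwz⟩ := mem_awayFiltration.mp hz
    exact mem_awayFiltration.mpr ⟨x * w, S.mul_mem hx hw, by rw [map_mul, ← hxy, ← hwz]; ring⟩
  mul_mem n y hy := by
    obtain ⟨x, hx, hxy⟩ := mem_awayFiltration.mp hy
    exact mem_awayFiltration.mpr ⟨x, hx, by rw [map_mul, ← hxy]; ring⟩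

theorem awayUnion_awayFiltration [IsLocalization.Away a B] (S : Subalgebra A B) :
    awayUnion B a (S.awayFiltration a) = S := by
  have hu : IsUnit (algebraMap A B a) := IsLocalization.Away.algebraMap_isUnit a
  ext x
  constructor
  · rintro ⟨n, y, hy, hxy⟩
    obtain ⟨x', hx', hx'y⟩ := mem_awayFiltration.mp hy
    rwa [(hu.pow n).mul_left_cancel (hx'y.trans hxy.symm)] at hx'
  · intro hx
    obtain ⟨⟨y, _, n, rfl⟩, hxy⟩ := IsLocalization.surj (Submonoid.powers a) x
    refine ⟨n, y, mem_awayFiltration.mpr ⟨x, hx, ?_⟩, ?_⟩ <;> simpa [mul_comm] using hxy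

end Subalgebra

end

theorem statement0_general {A : Type*} [CommRing A] (a : A)
    (R : Set (Localization.Away a)) :
    (∃ S : Subalgebra A (Localization.Away a), (S : Set (Localization.Away a)) = R) ↔
    (∃ I : ℕ → Ideal A,
      I 0 = ⊤ ∧
      (∀ n, I (n + 1) ≤ I n) ∧
      (∀ n m, I n * I m ≤ I (n + m)) ∧
      (∀ n, ∀ x ∈ I n, a * x ∈ I (n + 1)) ∧
      R = {x | ∃ n : ℕ, ∃ y ∈ I n,
        (algebraMap A (Localization.Away a) a) ^ n * x =
          algebraMap A (Localization.Away a) y}) := by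
  constructor
  · rintro ⟨S, rfl⟩
    obtain ⟨h0, hsucc, hmul, ha⟩ := S.isAwayFiltration_awayFiltration a
    exact ⟨S.awayFiltration a, h0, hsucc, hmul, ha, S.awayUnion_awayFiltration.symm⟩
  · rintro ⟨I, h0, hsucc, hmul, ha, rfl⟩
    exact ⟨(IsAwayFiltration.mk h0 hsucc hmul ha).toSubalgebra _, rfl⟩

/-- Let `A` be an integral domain and `a` a nonzero element of `A`.
A subset `R` of `A[a⁻¹]` is a subring with `A ⊆ R ⊆ A[a⁻¹]` if and only if
`R = ⋃_{n≥0} a⁻ⁿ·Iₙ` for some `a`-filtration `(Iₙ)` of `A`. -/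
theorem statement0 {A : Type*} [CommRing A] [IsDomain A] (a : A) (ha : a ≠ 0)
    (R : Set (Localization.Away a)) :
    (∃ S : Subalgebra A (Localization.Away a), (S : Set (Localization.Away a)) = R) ↔
    (∃ I : ℕ → Ideal A,
      I 0 = ⊤ ∧
      (∀ n, I (n + 1) ≤ I n) ∧
      (∀ n m, I n * I m ≤ I (n + m)) ∧
      (∀ n, ∀ x ∈ I n, a * x ∈ I (n + 1)) ∧
      R = {x | ∃ n : ℕ, ∃ y ∈ I n,
        (algebraMap A (Localization.Away a) a) ^ n * x =
          algebraMap A (Localization.Away a) y}) :=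
  statement0_general a R
end

section
/- Let A be a domain, a ≠ 0 in A, (Iₙ) an a-filtration of A, and R := Σ_{n≥0} a⁻ⁿIₙ. If P is a prime of R not containing a and p := P ∩ A, then P = p[a⁻¹] ∩ R = Σ_{n≥0} a⁻ⁿ(p ∩ Iₙ). -/
/-- Let `A` be a domain, `a ≠ 0` in `A`, `(Iₙ)` an `a`-filtration of `A`, and
`R := Σ_{n≥0} a⁻ⁿIₙ`. If `P` is a prime of `R` not containing `a` and `p := P ∩ A`, then
`P = p[a⁻¹] ∩ R = Σ_{n≥0} a⁻ⁿ(p ∩ Iₙ)`. -/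
theorem statement2 {A : Type*} [CommRing A] [IsDomain A] (a : A) (ha : a ≠ 0)
    (I : ℕ → Ideal A) (hI0 : I 0 = ⊤) (hIdesc : ∀ n, I (n + 1) ≤ I n)
    (hImul : ∀ n m, I n * I m ≤ I (n + m)) (hIa : ∀ n, ∀ x ∈ I n, a * x ∈ I (n + 1))
    (R : Subalgebra A (Localization.Away a))
    (hR : ∀ x, x ∈ R ↔ ∃ n : ℕ, ∃ y ∈ I n,
      (algebraMap A (Localization.Away a) a) ^ n * x = algebraMap A (Localization.Away a) y)
    (P : Ideal ↥R) (hP : P.IsPrime) (haP : algebraMap A ↥R a ∉ P)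
    (p : Ideal A) (hp : p = Ideal.comap (algebraMap A ↥R) P) :
    P = Ideal.comap R.val (Ideal.map (algebraMap A (Localization.Away a)) p) ∧
    (∀ x : ↥R, x ∈ P ↔ ∃ n : ℕ, ∃ y ∈ p ⊓ I n,
      (algebraMap A (Localization.Away a) a) ^ n * (x : Localization.Away a) =
        algebraMap A (Localization.Away a) y) := by
  set f := algebraMap A (Localization.Away a) with hf
  have hfinj : Function.Injective f :=
    IsLocalization.injective _ (powers_le_nonZeroDivisors_of_noZeroDivisors ha)
  -- coercion of algebraMap into R
  have hcoe : ∀ y : A, ((algebraMap A ↥R y : ↥R) : Localization.Away a) = f y := by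
    intro y; simp [hf]
  -- iterated a-multiplication
  have hpow : ∀ m N z, z ∈ I N → a ^ m * z ∈ I (N + m) := by
    intro m
    induction m with
    | zero => intro N z hz; simpa using hz
    | succ k ih =>
      intro N z hz
      have h := hIa (N + k) _ (ih N z hz)
      have : a ^ (k + 1) * z = a * (a ^ k * z) := by ring
      rw [this]
      simpa [Nat.add_assoc] using h
  -- key characterization (second conjunct)
  have key : ∀ x : ↥R, x ∈ P ↔ ∃ n : ℕ, ∃ y ∈ p ⊓ I n,
      f a ^ n * (x : Localization.Away a) = f y := by
    intro x
    constructor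
    · intro hxP
      obtain ⟨n, y, hyI, hxy⟩ := (hR (x : Localization.Away a)).mp x.2
      -- equality inside R
      have heq : (algebraMap A ↥R a) ^ n * x = algebraMap A ↥R y := by
        apply Subtype.ext
        push_cast
        exact hxy
      have hmem : algebraMap A ↥R y ∈ P := by
        rw [← heq]; exact P.mul_mem_left _ hxP
      have hyp : y ∈ p := by rw [hp]; exact hmem
      exact ⟨n, y, ⟨hyp, hyI⟩, hxy⟩
    · rintro ⟨n, y, ⟨hyp, hyI⟩, hxy⟩
      have hmem : algebraMap A ↥R y ∈ P := by rw [hp] at hyp; exact hyp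
      have heq : (algebraMap A ↥R a) ^ n * x = algebraMap A ↥R y := by
        apply Subtype.ext
        push_cast
        exact hxy
      have := heq ▸ hmem
      rcases hP.mem_or_mem this with h | h
      · exact absurd (hP.mem_of_pow_mem n h) haP
      · exact h
  refine ⟨?_, key⟩
  ext x
  rw [key x]
  constructor
  · rintro ⟨n, y, ⟨hyp, hyI⟩, hxy⟩
    show (x : Localization.Away a) ∈ Ideal.map f p
    have hu : IsUnit (f a ^ n) :=
      (IsLocalization.map_units (Localization.Away a)
        (⟨a, Submonoid.mem_powers a⟩ : Submonoid.powers a)).pow n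
    have hy : f y ∈ Ideal.map f p := Ideal.mem_map_of_mem f hyp
    have : f a ^ n * (x : Localization.Away a) ∈ Ideal.map f p := hxy ▸ hy
    rcases hu with ⟨u, hufa⟩
    have := Ideal.mul_mem_left _ (↑u⁻¹ : Localization.Away a) this
    rwa [← mul_assoc, ← hufa, Units.inv_mul, one_mul] at this
  · intro hx
    have hx' : (x : Localization.Away a) ∈ Ideal.map f p := hx
    rw [IsLocalization.mem_map_algebraMap_iff (Submonoid.powers a)] at hx'
    obtain ⟨⟨⟨y, hyp⟩, s⟩, hxs⟩ := hx'
    obtain ⟨m, hm⟩ := s.2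
    obtain ⟨N, z, hzI, hxz⟩ := (hR (x : Localization.Away a)).mp x.2
    -- a^N * y = a^m * z in A
    have heqA : a ^ N * y = a ^ m * z := by
      apply hfinj
      have h1 : f (a ^ N * y) = f a ^ N * ((x : Localization.Away a) * f ↑s) := by
        rw [hxs]; rw [map_mul, map_pow]
      have h2 : f (a ^ m * z) = f a ^ N * ((x : Localization.Away a) * f ↑s) := by
        rw [map_mul, map_pow, ← hm]
        rw [map_pow]
        calc f a ^ m * f z = f a ^ m * (f a ^ N * (x : Localization.Away a)) := by rw [hxz]
        _ = f a ^ N * ((x : Localization.Away a) * f a ^ m) := by ring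
      rw [h1, h2]
    refine ⟨N + m, a ^ N * y, ⟨p.mul_mem_left _ hyp, ?_⟩, ?_⟩
    · rw [heqA]
      exact hpow m N z hzI
    · rw [pow_add]
      calc f a ^ N * f a ^ m * (x : Localization.Away a)
          = f a ^ N * ((x : Localization.Away a) * f ↑s) := by rw [← hm, map_pow]; ring
        _ = f (a ^ N * y) := by
            rw [hxs, map_mul, map_pow]
end

section
/- Let A be a domain, a ≠ 0 ∈ A, (Iₙ) an a-filtration of A, R := Σ_{n≥0} a⁻ⁿIₙ, and let q ⊂ p be primes of A with a ∈ p \ q. Set Q := q[a⁻¹] ∩ R. Then there exists a prime P of R with Q ⊂ P and P ∩ A = p if and only if a⁻ⁿ(pIₙ + q ∩ Iₙ) ∩ A = p for every n ≥ 0. -/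
set_option maxHeartbeats 2000000 in
set_option synthInstance.maxHeartbeats 1000000 in
/-- Let `A` be a domain, `a ≠ 0 ∈ A`, `(Iₙ)` an `a`-filtration of `A`,
`R := Σ_{n≥0} a⁻ⁿIₙ`, and let `q ⊂ p` be primes of `A` with `a ∈ p \ q`.
Set `Q := q[a⁻¹] ∩ R`. Then there exists a prime `P` of `R` with `Q ⊂ P` and `P ∩ A = p`
if and only if `a⁻ⁿ(pIₙ + q ∩ Iₙ) ∩ A = p` for every `n ≥ 0`. -/
theorem statement3 {A : Type*} [CommRing A] [IsDomain A] (a : A) (ha : a ≠ 0)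
    (I : ℕ → Ideal A) (hI0 : I 0 = ⊤) (hIdesc : ∀ n, I (n + 1) ≤ I n)
    (hImul : ∀ n m, I n * I m ≤ I (n + m)) (hIa : ∀ n, ∀ x ∈ I n, a * x ∈ I (n + 1))
    (R : Subalgebra A (Localization.Away a))
    (hR : ∀ x, x ∈ R ↔ ∃ n : ℕ, ∃ y ∈ I n,
      (algebraMap A (Localization.Away a) a) ^ n * x = algebraMap A (Localization.Away a) y)
    (q p : Ideal A) (hq : q.IsPrime) (hp : p.IsPrime) (hqp : q < p)
    (hap : a ∈ p) (haq : a ∉ q)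
    (Q : Ideal ↥R)
    (hQ : Q = Ideal.comap R.val (Ideal.map (algebraMap A (Localization.Away a)) q)) :
    (∃ P : Ideal ↥R, P.IsPrime ∧ Q < P ∧ Ideal.comap (algebraMap A ↥R) P = p) ↔
    (∀ n : ℕ, ∀ x : A, (a ^ n * x ∈ p * I n ⊔ (q ⊓ I n)) ↔ x ∈ p) := by
  let g := algebraMap A (Localization.Away a)
  let f := algebraMap A ↥R
  have hginj : Function.Injective g :=
    IsLocalization.injective (Localization.Away a)
      (powers_le_nonZeroDivisors_of_noZeroDivisors ha)
  have hfg : ∀ x : A, ((f x : ↥R) : Localization.Away a) = g x := fun x => rfl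
  -- powers of a in the filtration
  have aPow : ∀ n, a ^ n ∈ I n := by
    intro n
    induction n with
    | zero => rw [hI0]; trivial
    | succ n ih => rw [pow_succ, mul_comm]; exact hIa n _ ih
  have mulPow : ∀ m k (z : A), z ∈ I m → a ^ k * z ∈ I (m + k) := by
    intro m k z hz
    induction k with
    | zero => simpa using hz
    | succ k ih =>
        have h1 := hIa (m + k) _ ih
        have h2 : a ^ (k+1) * z = a * (a ^ k * z) := by ring
        rw [h2]
        exact h1
  have hPmul : ∀ n m (y z : A), y ∈ p * I n → z ∈ I m → z * y ∈ p * I (n + m) := by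
    intro n m y z hy hz
    have h1 : y * z ∈ (p * I n) * I m := Ideal.mul_mem_mul hy hz
    rw [mul_assoc] at h1
    have h2 : p * (I n * I m) ≤ p * I (n + m) := Ideal.mul_mono_right (hImul n m)
    rw [mul_comm z y]
    exact h2 h1
  -- elements a^{-n} y of R
  have memR : ∀ n (y : A), y ∈ I n →
      (IsLocalization.mk' (Localization.Away a) y
        (⟨a ^ n, pow_mem (Submonoid.mem_powers a) n⟩ : Submonoid.powers a)) ∈ R := by
    intro n y hy
    rw [hR]
    refine ⟨n, y, hy, ?_⟩
    rw [← map_pow, mul_comm]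
    exact IsLocalization.mk'_spec (Localization.Away a) y _
  have memR_spec : ∀ n (y : A),
      (IsLocalization.mk' (Localization.Away a) y
        (⟨a ^ n, pow_mem (Submonoid.mem_powers a) n⟩ : Submonoid.powers a)) * g (a ^ n)
        = g y := by
    intro n y
    exact IsLocalization.mk'_spec (Localization.Away a) y _
  -- the ideal capturing elements of p.map f
  let Tpred : ↥R → Prop :=
    fun u => ∃ n, ∃ y ∈ p * I n, (u : Localization.Away a) * g (a ^ n) = g y
  let T : Ideal ↥R :=
    { carrier := Tpred
      zero_mem' := ⟨0, 0, zero_mem _, by simp⟩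
      add_mem' := by
        rintro u v ⟨n, y, hy, hu⟩ ⟨m, z, hz, hv⟩
        refine ⟨n + m, a ^ m * y + a ^ n * z, ?_, ?_⟩
        · refine add_mem (hPmul n m y (a^m) hy (aPow m)) ?_
          rw [Nat.add_comm n m]
          exact hPmul m n z (a^n) hz (aPow n)
        · push_cast
          rw [pow_add, map_mul, map_add, map_mul, map_mul, map_pow, map_pow, ← map_pow,
            ← map_pow, add_mul,
            show (u : Localization.Away a) * (g (a^n) * g (a^m))
              = ((u : Localization.Away a) * g (a^n)) * g (a^m) by ring, hu,
            show (v : Localization.Away a) * (g (a^n) * g (a^m))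
              = ((v : Localization.Away a) * g (a^m)) * g (a^n) by ring, hv]
          ring
      smul_mem' := by
        rintro c u ⟨n, y, hy, hu⟩
        obtain ⟨m, z, hz, hc⟩ := (hR (c : Localization.Away a)).1 c.2
        rw [← map_pow] at hc
        refine ⟨n + m, z * y, hPmul n m y z hy hz, ?_⟩
        have hcu : ((c • u : ↥R) : Localization.Away a)
            = (c : Localization.Away a) * (u : Localization.Away a) := rfl
        rw [hcu, pow_add, map_mul, map_mul]
        calc (c : Localization.Away a) * (u : Localization.Away a) * (g (a^n) * g (a^m))
            = (g (a^m) * (c : Localization.Away a))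
              * ((u : Localization.Away a) * g (a^n)) := by ring
          _ = g z * g y := by rw [hc, hu] }
  have memT : ∀ u : ↥R, u ∈ T ↔ Tpred u := fun u => Iff.rfl
  have claimB : ∀ u : ↥R, u ∈ Ideal.map f p →
      ∃ n, ∃ y ∈ p * I n, (u : Localization.Away a) * g (a ^ n) = g y := by
    intro u hu
    have hle : Ideal.map f p ≤ T := by
      rw [Ideal.map_le_iff_le_comap]
      intro x hx
      rw [Ideal.mem_comap, memT]
      refine ⟨0, x, ?_, by simp [hfg]⟩
      rw [hI0, Ideal.mul_top]; exact hx
    exact (memT u).1 (hle hu)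
  have claimC : ∀ u : ↥R, u ∈ Q →
      ∃ n, ∃ y, y ∈ q ⊓ I n ∧ (u : Localization.Away a) * g (a ^ n) = g y := by
    intro u hu
    rw [hQ, Ideal.mem_comap] at hu
    have hu' : (u : Localization.Away a) ∈ Ideal.map g q := hu
    rw [IsLocalization.mem_map_algebraMap_iff (Submonoid.powers a) (Localization.Away a)]
      at hu'
    obtain ⟨⟨⟨x, hxq⟩, ⟨s, ⟨k, rfl⟩⟩⟩, hux⟩ := hu'
    simp only [Submonoid.mk_smul] at hux
    have hux' : (u : Localization.Away a) * g (a ^ k) = g x := hux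
    obtain ⟨m, z, hz, hc⟩ := (hR (u : Localization.Away a)).1 u.2
    rw [← map_pow] at hc
    refine ⟨m + k, a ^ k * z, ⟨?_, mulPow m k z hz⟩, ?_⟩
    · have heq : g (a ^ k * z) = g (a ^ m * x) := by
        rw [map_mul, map_mul, ← hc, ← hux']
        ring
      rw [hginj heq]
      exact q.mul_mem_left _ hxq
    · rw [pow_add, map_mul, map_mul]
      calc (u : Localization.Away a) * (g (a^m) * g (a^k))
          = (g (a^m) * (u : Localization.Away a)) * g (a^k) := by ring
        _ = g z * g (a^k) := by rw [hc]
        _ = g (a^k) * g z := mul_comm _ _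
  have claimB' : ∀ n, ∀ u ∈ p * I n, ∃ r : ↥R, r ∈ Ideal.map f p ∧
      (r : Localization.Away a) * g (a ^ n) = g u := by
    intro n u hu
    refine Submodule.mul_induction_on hu ?_ ?_
    · intro π hπ y hy
      refine ⟨f π * ⟨_, memR n y hy⟩, Ideal.mul_mem_right _ _ (Ideal.mem_map_of_mem f hπ), ?_⟩
      have hc : ((f π * ⟨_, memR n y hy⟩ : ↥R) : Localization.Away a) =
          g π * IsLocalization.mk' (Localization.Away a) y
            (⟨a ^ n, pow_mem (Submonoid.mem_powers a) n⟩ : Submonoid.powers a) := rfl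
      rw [hc, mul_assoc, memR_spec n y, ← map_mul]
    · rintro x y ⟨r, hr, hr'⟩ ⟨s, hs, hs'⟩
      refine ⟨r + s, add_mem hr hs, ?_⟩
      push_cast
      rw [add_mul, hr', hs', ← map_add]
  have claimC' : ∀ n, ∀ v, v ∈ q ⊓ I n → ∃ s : ↥R, s ∈ Q ∧
      (s : Localization.Away a) * g (a ^ n) = g v := by
    rintro n v ⟨hvq, hvI⟩
    refine ⟨⟨_, memR n v hvI⟩, ?_, memR_spec n v⟩
    rw [hQ, Ideal.mem_comap]
    show (IsLocalization.mk' (Localization.Away a) v _ : Localization.Away a)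
      ∈ Ideal.map g q
    rw [IsLocalization.mem_map_algebraMap_iff (Submonoid.powers a) (Localization.Away a)]
    exact ⟨⟨⟨v, hvq⟩, ⟨a ^ n, pow_mem (Submonoid.mem_powers a) n⟩⟩, memR_spec n v⟩
  -- key equivalence
  have key : ∀ x : A, f x ∈ Ideal.map f p ⊔ Q ↔
      ∃ n, a ^ n * x ∈ p * I n ⊔ (q ⊓ I n) := by
    intro x
    constructor
    · intro hx
      rw [Submodule.mem_sup] at hx
      obtain ⟨u, hu, v, hv, huv⟩ := hx
      obtain ⟨n, y, hy, hu'⟩ := claimB u hu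
      obtain ⟨m, z, ⟨hzq, hzI⟩, hv'⟩ := claimC v hv
      refine ⟨n + m, ?_⟩
      have heq : a ^ (n + m) * x = a ^ m * y + a ^ n * z := by
        apply hginj
        rw [map_mul, map_add, map_mul, map_mul, map_pow]
        calc g a ^ (n+m) * g x
            = ((u : Localization.Away a) + (v : Localization.Away a)) * g (a ^ (n+m)) := by
              rw [← map_pow,
                show ((u : Localization.Away a) + (v : Localization.Away a))
                  = ((f x : ↥R) : Localization.Away a) by rw [← huv]; rfl, hfg]
              ring
          _ = ((u : Localization.Away a) * g (a^n)) * g (a^m)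
              + ((v : Localization.Away a) * g (a^m)) * g (a^n) := by
              rw [pow_add, map_mul]; ring
          _ = g (a^m) * g y + g (a^n) * g z := by rw [hu', hv']; ring
      rw [heq]
      refine add_mem (Submodule.mem_sup_left (hPmul n m y (a^m) hy (aPow m)))
        (Submodule.mem_sup_right ⟨q.mul_mem_left _ hzq, ?_⟩)
      rw [Nat.add_comm n m]
      exact mulPow m n z hzI
    · rintro ⟨n, hx⟩
      rw [Submodule.mem_sup] at hx
      obtain ⟨u, hu, v, hv, huv⟩ := hx
      obtain ⟨r, hr, hr'⟩ := claimB' n u hu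
      obtain ⟨s, hs, hs'⟩ := claimC' n v hv
      have hunit : IsUnit (g (a ^ n)) :=
        IsLocalization.map_units (Localization.Away a)
          (⟨a ^ n, pow_mem (Submonoid.mem_powers a) n⟩ : Submonoid.powers a)
      have hfx : f x = r + s := by
        apply Subtype.ext
        apply hunit.mul_left_cancel
        push_cast
        rw [mul_comm (g (a^n)), mul_comm (g (a^n)), add_mul, hr', hs', hfg, ← map_mul,
          ← map_add, mul_comm, huv]
      rw [hfx]
      exact add_mem (Submodule.mem_sup_left hr) (Submodule.mem_sup_right hs)
  have haQ : f a ∉ Q := by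
    intro hfa
    rw [hQ, Ideal.mem_comap] at hfa
    have hfa' : (g a : Localization.Away a) ∈ Ideal.map g q := hfa
    rw [IsLocalization.mem_map_algebraMap_iff (Submonoid.powers a) (Localization.Away a)]
      at hfa'
    obtain ⟨⟨⟨x, hxq⟩, ⟨s, ⟨k, rfl⟩⟩⟩, hux⟩ := hfa'
    simp only [Submonoid.mk_smul] at hux
    have hux' : g a * g (a ^ k) = g x := hux
    rw [← map_mul] at hux'
    have hmem : a * a ^ k ∈ q := by rw [hginj hux']; exact hxq
    rcases hq.mul_mem_iff_mem_or_mem.1 hmem with h | h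
    · exact haq h
    · exact haq (hq.mem_of_pow_mem k h)
  constructor
  · -- P exists → divisibility condition
    rintro ⟨P, hP, hQP, hcomap⟩ n x
    constructor
    · intro hx
      have hfx : f x ∈ Ideal.map f p ⊔ Q := (key x).2 ⟨n, hx⟩
      have hJP : Ideal.map f p ⊔ Q ≤ P := by
        refine sup_le ?_ hQP.le
        rw [Ideal.map_le_iff_le_comap, hcomap]
      have hPx : f x ∈ P := hJP hfx
      rw [← hcomap]; exact hPx
    · intro hx
      refine Submodule.mem_sup_left ?_
      rw [mul_comm (a ^ n) x]
      exact Ideal.mul_mem_mul hx (aPow n)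
  · -- divisibility condition → P exists
    intro hcond
    have hdisj : Disjoint ((Ideal.map f p ⊔ Q : Ideal ↥R) : Set ↥R)
        ((Submonoid.map (f : A →* ↥R) p.primeCompl : Submonoid ↥R) : Set ↥R) := by
      rw [Set.disjoint_left]
      rintro u hu ⟨x, hxp, rfl⟩
      obtain ⟨n, hn⟩ := (key x).1 hu
      exact hxp ((hcond n x).1 hn)
    obtain ⟨P, hP, hJP, hPd⟩ := Ideal.exists_le_prime_disjoint _ _ hdisj
    refine ⟨P, hP, ?_, ?_⟩
    · refine lt_of_le_of_ne (le_sup_right.trans hJP) ?_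
      intro hQeq
      have hfa : f a ∈ P := hJP (Submodule.mem_sup_left (Ideal.mem_map_of_mem f hap))
      rw [← hQeq] at hfa
      exact haQ hfa
    · apply le_antisymm
      · intro x hx
        by_contra hxp
        have hxS : f x ∈ Submonoid.map (f : A →* ↥R) p.primeCompl := ⟨x, hxp, rfl⟩
        exact Set.disjoint_left.1 hPd hx hxS
      · intro x hx
        exact hJP (Submodule.mem_sup_left (Ideal.mem_map_of_mem f hx))
end

section
/- Let A be a domain, a ≠ 0 ∈ A, (Iₙ) an a-filtration of A, R := Σ_{n≥0} a⁻ⁿIₙ, and p a prime of A containing a. Then p is the contraction of a prime ideal of R if and only if a⁻ⁿ·pIₙ ∩ A = p for each n ≥ 0. Moreover, in that case p ⊇ I₁. -/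
set_option maxHeartbeats 1000000
set_option synthInstance.maxHeartbeats 400000


/-- Let `A` be a domain, `a ≠ 0 ∈ A`, `(Iₙ)` an `a`-filtration of `A`,
`R := Σ_{n≥0} a⁻ⁿIₙ`, and `p` a prime of `A` containing `a`. Then `p` is the contraction of
a prime ideal of `R` if and only if `a⁻ⁿ·pIₙ ∩ A = p` for each `n ≥ 0`.
Moreover, in that case `p ⊇ I₁`. -/
theorem statement4 {A : Type*} [CommRing A] [IsDomain A] (a : A) (ha : a ≠ 0)
    (I : ℕ → Ideal A) (hI0 : I 0 = ⊤) (hIdesc : ∀ n, I (n + 1) ≤ I n)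
    (hImul : ∀ n m, I n * I m ≤ I (n + m)) (hIa : ∀ n, ∀ x ∈ I n, a * x ∈ I (n + 1))
    (R : Subalgebra A (Localization.Away a))
    (hR : ∀ x, x ∈ R ↔ ∃ n : ℕ, ∃ y ∈ I n,
      (algebraMap A (Localization.Away a) a) ^ n * x = algebraMap A (Localization.Away a) y)
    (p : Ideal A) (hp : p.IsPrime) (hap : a ∈ p) :
    ((∃ P : Ideal ↥R, P.IsPrime ∧ Ideal.comap (algebraMap A ↥R) P = p) ↔
      (∀ n : ℕ, ∀ x : A, a ^ n * x ∈ p * I n ↔ x ∈ p)) ∧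
    ((∃ P : Ideal ↥R, P.IsPrime ∧ Ideal.comap (algebraMap A ↥R) P = p) → I 1 ≤ p) := by
  set B := Localization.Away a with hB
  set f : A →+* B := algebraMap A B with hf
  have hpow : Submonoid.powers a ≤ nonZeroDivisors A :=
    powers_le_nonZeroDivisors_of_noZeroDivisors ha
  have hinj : Function.Injective f := IsLocalization.injective B hpow
  haveI : IsDomain B := IsLocalization.isDomain_localization hpow
  have hane : f a ≠ 0 := fun h => ha (hinj (h.trans (map_zero f).symm))
  -- a^n ∈ I n
  have haN : ∀ n, a ^ n ∈ I n := by
    intro n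
    induction n with
    | zero => rw [pow_zero, hI0]; exact Submodule.mem_top
    | succ n ih => rw [pow_succ, mul_comm]; exact hIa n _ ih
  -- a * (p * I n) ⊆ p * I (n+1)
  have hmulP : ∀ n, ∀ z ∈ p * I n, a * z ∈ p * I (n + 1) := by
    intro n z hz
    refine Submodule.mul_induction_on hz (fun q hq y hy => ?_) (fun x y hx hy => ?_)
    · rw [show a * (q * y) = q * (a * y) by ring]
      exact Ideal.mul_mem_mul hq (hIa n y hy)
    · rw [mul_add]; exact add_mem hx hy
  have hmulPk : ∀ k n, ∀ z ∈ p * I n, a ^ k * z ∈ p * I (n + k) := by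
    intro k
    induction k with
    | zero => intro n z hz; rw [pow_zero, one_mul]; exact hz
    | succ k ih =>
      intro n z hz
      rw [pow_succ, mul_comm (a ^ k) a, mul_assoc]
      exact (show n + (k + 1) = n + k + 1 by ring) ▸ hmulP (n + k) _ (ih n z hz)
  -- I m * (p * I n) ⊆ p * I (m+n)
  have hmulI : ∀ m n, ∀ y ∈ I m, ∀ z ∈ p * I n, y * z ∈ p * I (m + n) := by
    intro m n y hy z hz
    refine Submodule.mul_induction_on hz (fun q hq w hw => ?_) (fun x₁ x₂ hx₁ hx₂ => ?_)
    · rw [show y * (q * w) = q * (y * w) by ring]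
      exact Ideal.mul_mem_mul hq (hImul m n (Ideal.mul_mem_mul hy hw))
    · rw [mul_add]; exact add_mem hx₁ hx₂
  have hcoe : ∀ x : A, ((algebraMap A ↥R x : ↥R) : B) = f x := fun x => rfl
  have hiff : (∃ P : Ideal ↥R, P.IsPrime ∧ Ideal.comap (algebraMap A ↥R) P = p) ↔
      (∀ n : ℕ, ∀ x : A, a ^ n * x ∈ p * I n ↔ x ∈ p) := by
    constructor
    · rintro ⟨P, hP, hPc⟩ n x
      constructor
      · intro h
        -- claim: every z ∈ p * I n lifts to an element of P with f(a)^n * r = f z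
        have claim : ∀ z ∈ p * I n, ∃ r : ↥R, r ∈ P ∧ f a ^ n * (r : B) = f z := by
          intro z hz
          refine Submodule.mul_induction_on hz (fun q hq y hy => ?_) (fun x₁ x₂ hx₁ hx₂ => ?_)
          · have hanp : (a ^ n : A) ∈ Submonoid.powers a := ⟨n, rfl⟩
            set s : B := IsLocalization.mk' B y (⟨a ^ n, hanp⟩ : Submonoid.powers a) with hs
            have hspec : s * f (a ^ n) = f y := IsLocalization.mk'_spec B y _
            have hsR : s ∈ R := (hR s).mpr ⟨n, y, hy, by
              rw [← map_pow] at *; rw [mul_comm]; exact hspec⟩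
            refine ⟨algebraMap A ↥R q * ⟨s, hsR⟩, P.mul_mem_right _ ?_, ?_⟩
            · have hq' : q ∈ Ideal.comap (algebraMap A ↥R) P := hPc.symm ▸ hq
              exact Ideal.mem_comap.mp hq'
            · push_cast
              rw [map_pow] at hspec
              rw [map_mul]
              linear_combination f q * hspec
          · obtain ⟨r₁, hr₁P, hr₁⟩ := hx₁
            obtain ⟨r₂, hr₂P, hr₂⟩ := hx₂
            refine ⟨r₁ + r₂, add_mem hr₁P hr₂P, ?_⟩
            push_cast
            rw [map_add, mul_add, hr₁, hr₂]
        obtain ⟨r, hrP, hr⟩ := claim _ h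
        have : (r : B) = f x := by
          have h2 : f a ^ n * (r : B) = f a ^ n * f x := by
            rw [hr, map_mul, map_pow]
          exact mul_left_cancel₀ (pow_ne_zero n hane) h2
        have hrx : r = algebraMap A ↥R x := Subtype.ext (by rw [hcoe, this])
        have : algebraMap A ↥R x ∈ P := hrx ▸ hrP
        exact hPc ▸ (Ideal.mem_comap.mpr this)
      · intro hx
        exact mul_comm x (a ^ n) ▸ Ideal.mul_mem_mul hx (haN n)
    · intro H
      set f' : A →+* ↥R := algebraMap A ↥R with hf'
      set P₀ : Ideal ↥R := Ideal.map f' p with hP₀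
      have hQ : ∀ w : ↥R, w ∈ P₀ → ∃ N : ℕ, ∃ z ∈ p * I N, f a ^ N * (w : B) = f z := by
        intro w hw
        have hw' : w ∈ Ideal.span (f' '' (p : Set A)) := hw
        refine Submodule.span_induction ?_ ?_ ?_ ?_ hw'
        · rintro _ ⟨q, hq, rfl⟩
          refine ⟨0, q, ?_, ?_⟩
          · rw [hI0, Ideal.mul_top]; exact hq
          · rw [pow_zero, one_mul, hcoe]
        · exact ⟨0, 0, (p * I 0).zero_mem, by simp⟩
        · rintro w₁ w₂ _ _ ⟨N₁, z₁, hz₁, he₁⟩ ⟨N₂, z₂, hz₂, he₂⟩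
          refine ⟨N₁ + N₂, a ^ N₂ * z₁ + a ^ N₁ * z₂, ?_, ?_⟩
          · exact add_mem (hmulPk N₂ N₁ z₁ hz₁)
              ((show N₂ + N₁ = N₁ + N₂ by ring) ▸ hmulPk N₁ N₂ z₂ hz₂)
          · push_cast
            simp only [map_add, map_mul, map_pow]
            linear_combination (f a) ^ N₂ * he₁ + (f a) ^ N₁ * he₂
        · rintro r w' _ ⟨N, z, hz, he⟩
          obtain ⟨m, y, hy, hry⟩ := (hR (r : B)).mp r.2
          refine ⟨m + N, y * z, hmulI m N y hy z hz, ?_⟩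
          have hsm : ((r • w' : ↥R) : B) = (r : B) * (w' : B) := rfl
          rw [hsm, map_mul]
          linear_combination (f a ^ N * (w' : B)) * hry + f y * he
      have hcomap : Ideal.comap f' P₀ = p := by
        refine le_antisymm (fun x hx => ?_) Ideal.le_comap_map
        obtain ⟨N, z, hz, he⟩ := hQ _ (Ideal.mem_comap.mp hx)
        rw [hcoe] at he
        have : f (a ^ N * x) = f z := by rw [map_mul, map_pow]; exact he
        have hz' : a ^ N * x = z := hinj this
        exact (H N x).mp (hz' ▸ hz)
      set S : Submonoid ↥R := Submonoid.map (f' : A →* ↥R) p.primeCompl with hS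
      have hdisj : Disjoint (P₀ : Set ↥R) (S : Set ↥R) := by
        rw [Set.disjoint_left]
        rintro w hwP ⟨s, hs, rfl⟩
        exact hs (hcomap ▸ Ideal.mem_comap.mpr hwP)
      obtain ⟨P, hPpr, hle, hPdisj⟩ := Ideal.exists_le_prime_disjoint P₀ S hdisj
      refine ⟨P, hPpr, ?_⟩
      refine le_antisymm (fun x hx => ?_) (le_trans (hcomap ▸ Ideal.comap_mono hle : p ≤ _) le_rfl)
      by_contra hxp
      exact Set.disjoint_left.mp hPdisj (Ideal.mem_comap.mp hx)
        ⟨x, hxp, rfl⟩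
  refine ⟨hiff, fun hex y hy => ?_⟩
  have H := hiff.mp hex
  refine (H 1 y).mp ?_
  rw [pow_one]
  exact Ideal.mul_mem_mul hap hy
end

section
/- Let A be a domain, p ⊆ q primes of A, and R the symbolic Rees algebra of p. Then Q := (q,t⁻¹) ⊕ pt ⊕ p^(2)t² ⊕ ⋯ is a prime ideal of R lying over (q,t⁻¹) in A[t⁻¹], with R/Q ≅ A/q, and Q is maximal among primes of R lying over (q,t⁻¹). -/
noncomputable section

open LaurentPolynomial

/-- The `n`-th symbolic power `p^(n) := pⁿA_p ∩ A` of a prime ideal `p`. -/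
def symbolicPower (A : Type*) [CommRing A] (p : Ideal A) [p.IsPrime] (n : ℕ) : Ideal A :=
  Ideal.comap (algebraMap A (Localization.AtPrime p))
    (Ideal.map (algebraMap A (Localization.AtPrime p)) (p ^ n))

/-- The symbolic Rees algebra `R := A[t⁻¹, pt, p^(2)t², …] = ⊕_{n∈ℤ} p^(n)tⁿ`,
as a subalgebra of the Laurent polynomial ring `A[t, t⁻¹]`. -/
def symbolicReesAlgebra (A : Type*) [CommRing A] (p : Ideal A) [p.IsPrime] :
    Subalgebra A (LaurentPolynomial A) :=
  Algebra.adjoin A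
    ({T (-1)} ∪ ⋃ n : ℕ, (fun x => C x * T (n : ℤ)) '' (symbolicPower A p n : Set A))

/-!
Every element of the symbolic Rees algebra has its positive-degree coefficients in `p ⊆ q`,
because `p^(n) ⊆ p` for `n ≥ 1`. For such Laurent polynomials the degree-zero coefficient of a
product is `f₀ g₀ + ∑_{i ≠ 0} f_i g_{-i}`, and every summand of the sum lies in `q`. So
`f ↦ f₀ mod q` is a surjective ring homomorphism `R → A/q` with kernel `Q`. Every `f ∈ R` is
congruent to the constant `f₀` modulo `Q`, hence a prime `P ⊇ Q` with the same contraction to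
`A[t⁻¹]` as `Q` contains nothing more than `Q`.
-/

theorem Polynomial.map_C_sup_span_X_eq_comap_constantCoeff {A : Type*} [CommRing A]
    (I : Ideal A) :
    Ideal.map Polynomial.C I ⊔ Ideal.span {Polynomial.X} =
      Ideal.comap Polynomial.constantCoeff I := by
  refine le_antisymm (sup_le ?_ ?_) fun P hP => ?_
  · rw [Ideal.map_le_iff_le_comap]
    intro a ha
    simpa using ha
  · rw [Ideal.span_le, Set.singleton_subset_iff]
    simp
  · rw [← Polynomial.X_mul_divX_add P]
    exact Ideal.add_mem _ (Ideal.mem_sup_right (Ideal.mul_mem_right _ _ (Ideal.subset_span rfl)))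
      (Ideal.mem_sup_left (Ideal.mem_map_of_mem _ hP))

theorem Ideal.eq_of_le_of_comap_eq {R S F : Type*} [CommRing R] [CommRing S] [FunLike F R S]
    [RingHomClass F R S] (ψ : F) {P Q : Ideal S}
    (hψ : Function.Surjective ((Ideal.Quotient.mk Q).comp (ψ : R →+* S))) (hQP : Q ≤ P)
    (h : P.comap ψ = Q.comap ψ) : P = Q := by
  refine le_antisymm (fun s hs => ?_) hQP
  obtain ⟨r, hr⟩ := hψ (Ideal.Quotient.mk Q s)
  have hsr : s - ψ r ∈ Q := Ideal.Quotient.eq.mp hr.symm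
  have hr : r ∈ P.comap ψ := by simpa using P.sub_mem hs (hQP hsr)
  rw [h, Ideal.mem_comap] at hr
  simpa using Q.add_mem hsr hr

namespace LaurentPolynomial

variable {A : Type*} [CommRing A]

theorem coeff_mul_mem_of_forall_add_eq {I : Ideal A} {f g : A[T;T⁻¹]} {n : ℤ}
    (h : ∀ i j, i + j = n → f.coeff i * g.coeff j ∈ I) : (f * g).coeff n ∈ I := by
  classical
  rw [AddMonoidAlgebra.coeff_mul]
  refine Ideal.sum_mem _ fun i _ => Ideal.sum_mem _ fun j _ => ?_
  dsimp only
  split_ifs with hij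
  · exact h i j hij
  · exact I.zero_mem

def positiveCoeffsIn (I : Ideal A) : Subalgebra A A[T;T⁻¹] where
  carrier := {f | ∀ n : ℤ, 0 < n → f.coeff n ∈ I}
  mul_mem' {f g} hf hg n hn := coeff_mul_mem_of_forall_add_eq fun i j hij => by
    rcases lt_or_ge 0 i with hi | hi
    · exact I.mul_mem_right _ (hf i hi)
    · exact I.mul_mem_left _ (hg j (by omega))
  add_mem' {f g} hf hg n hn := by
    rw [AddMonoidAlgebra.coeff_add, Finsupp.add_apply]
    exact I.add_mem (hf n hn) (hg n hn)
  algebraMap_mem' a n hn := by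
    rw [algebraMap_apply, Algebra.algebraMap_self, RingHom.id_apply, C_apply, if_neg hn.ne']
    exact I.zero_mem

theorem positiveCoeffsIn_mono : Monotone (positiveCoeffsIn (A := A)) :=
  fun _ _ hIJ _ hf n hn => hIJ (hf n hn)

theorem coeff_zero_mul_sub_mem {I : Ideal A} {f g : A[T;T⁻¹]} (hf : f ∈ positiveCoeffsIn I)
    (hg : g ∈ positiveCoeffsIn I) : (f * g).coeff 0 - f.coeff 0 * g.coeff 0 ∈ I := by
  set a := f.coeff 0
  set b := g.coeff 0
  have hmul : ((f - C a) * (g - C b)).coeff 0 = (f * g).coeff 0 - a * b := by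
    rw [show (f - C a) * (g - C b) = f * g - a • g - b • f + C (a * b) by
      rw [smul_eq_C_mul, smul_eq_C_mul, map_mul]; ring]
    simp only [AddMonoidAlgebra.coeff_add, AddMonoidAlgebra.coeff_sub, AddMonoidAlgebra.coeff_smul,
      Finsupp.add_apply, Finsupp.sub_apply, Finsupp.smul_apply, smul_eq_mul, C_apply, if_true]
    ring
  have key : ((f - C a) * (g - C b)).coeff 0 ∈ I := by
    refine coeff_mul_mem_of_forall_add_eq fun i j hij => ?_
    simp only [AddMonoidAlgebra.coeff_sub, Finsupp.sub_apply, C_apply]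
    rcases lt_trichotomy 0 i with hi | rfl | hi
    · rw [if_neg hi.ne']
      exact I.mul_mem_right _ (by simpa using hf i hi)
    · simp [a]
    · rw [if_neg (by omega : j ≠ 0)]
      exact I.mul_mem_left _ (by simpa using hg j (by omega))
  rwa [hmul] at key

section coeffZeroMod

variable {I : Ideal A} {S : Subalgebra A A[T;T⁻¹]} (hS : S ≤ positiveCoeffsIn I)

def coeffZeroMod : S →+* A ⧸ I where
  toFun f := Ideal.Quotient.mk I ((f : A[T;T⁻¹]).coeff 0)
  map_one' := by simp
  map_mul' f g := Ideal.Quotient.eq.mpr (coeff_zero_mul_sub_mem (hS f.2) (hS g.2))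
  map_zero' := by simp
  map_add' f g := by simp

theorem coeffZeroMod_apply (f : S) :
    coeffZeroMod hS f = Ideal.Quotient.mk I ((f : A[T;T⁻¹]).coeff 0) := rfl

theorem coeffZeroMod_surjective : Function.Surjective (coeffZeroMod hS) := by
  intro x
  obtain ⟨a, rfl⟩ := Ideal.Quotient.mk_surjective x
  exact ⟨algebraMap A S a, by simp [coeffZeroMod_apply, algebraMap_apply]⟩

end coeffZeroMod

theorem coeff_zero_aeval_T_neg_one (P : Polynomial A) :
    (Polynomial.aeval (T (-1) : A[T;T⁻¹]) P).coeff 0 = P.coeff 0 := by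
  induction P using Polynomial.induction_on' with
  | add f g hf hg => simp [hf, hg]
  | monomial n a =>
    simp [Polynomial.coeff_monomial, T_pow, algebraMap_apply, ← single_eq_C_mul_T,
      AddMonoidAlgebra.coeff_single, Finsupp.single_apply]

end LaurentPolynomial

section SymbolicRees

variable {A : Type*} [CommRing A]

theorem symbolicPower_le_self (p : Ideal A) [p.IsPrime] {n : ℕ} (hn : n ≠ 0) :
    symbolicPower A p n ≤ p := by
  refine le_trans (Ideal.comap_mono (Ideal.map_mono (Ideal.pow_le_self hn))) ?_
  rw [Localization.AtPrime.map_eq_maximalIdeal]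
  exact Localization.AtPrime.under_maximalIdeal.le

theorem symbolicReesAlgebra_le_positiveCoeffsIn (p : Ideal A) [p.IsPrime] :
    symbolicReesAlgebra A p ≤ positiveCoeffsIn p := by
  refine Algebra.adjoin_le ?_
  rintro _ (rfl | ⟨_, ⟨m, rfl⟩, a, ha, rfl⟩) n hn
  · simp [show -1 ≠ n by omega]
  · dsimp only
    rw [← single_eq_C_mul_T, AddMonoidAlgebra.coeff_single, Finsupp.single_apply]
    split_ifs with hmn
    · exact symbolicPower_le_self p (by omega) ha
    · exact p.zero_mem

end SymbolicRees

theorem statement11_general (A : Type*) [CommRing A] (p q : Ideal A)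
    [p.IsPrime] [q.IsPrime] (hpq : p ≤ q)
    (ti : ↥(symbolicReesAlgebra A p))
    (hti : (ti : LaurentPolynomial A) = T (-1))
    (Q : Ideal ↥(symbolicReesAlgebra A p))
    (hQ : ∀ f : ↥(symbolicReesAlgebra A p),
      f ∈ Q ↔ (AddMonoidAlgebra.coeff (f : LaurentPolynomial A) : ℤ →₀ A) 0 ∈ q) :
    Q.IsPrime ∧
    Ideal.comap (Polynomial.aeval ti : Polynomial A →ₐ[A] ↥(symbolicReesAlgebra A p)) Q =
      Ideal.map Polynomial.C q ⊔ Ideal.span {Polynomial.X} ∧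
    Nonempty ((↥(symbolicReesAlgebra A p) ⧸ Q) ≃+* A ⧸ q) ∧
    (∀ P : Ideal ↥(symbolicReesAlgebra A p), P.IsPrime →
      Ideal.comap (Polynomial.aeval ti : Polynomial A →ₐ[A] ↥(symbolicReesAlgebra A p)) P =
        Ideal.map Polynomial.C q ⊔ Ideal.span {Polynomial.X} →
      Q ≤ P → P = Q) := by
  set φ := coeffZeroMod
    ((symbolicReesAlgebra_le_positiveCoeffsIn p).trans (positiveCoeffsIn_mono hpq))
  have hker : Q = RingHom.ker φ :=
    Ideal.ext fun f => (hQ f).trans Ideal.Quotient.eq_zero_iff_mem.symm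
  have hcomap : Ideal.comap (Polynomial.aeval ti) Q = Ideal.comap Polynomial.constantCoeff q := by
    ext P
    have hcoe : ((Polynomial.aeval ti P : symbolicReesAlgebra A p) : A[T;T⁻¹]) =
        Polynomial.aeval (T (-1)) P :=
      hti ▸ (Polynomial.aeval_algHom_apply (symbolicReesAlgebra A p).val ti P).symm
    rw [Ideal.mem_comap, hQ, hcoe, coeff_zero_aeval_T_neg_one, Ideal.mem_comap,
      Polynomial.constantCoeff_apply]
  have hsurj : Function.Surjective ((Ideal.Quotient.mk Q).comp
      ((Polynomial.aeval ti : Polynomial A →ₐ[A] _) : Polynomial A →+* _)) := by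
    intro x
    obtain ⟨f, rfl⟩ := Ideal.Quotient.mk_surjective x
    refine ⟨Polynomial.C ((f : A[T;T⁻¹]).coeff 0), Ideal.Quotient.eq.mpr ((hQ _).mpr ?_)⟩
    simp [LaurentPolynomial.algebraMap_apply]
  have hlies := hcomap.trans (Polynomial.map_C_sup_span_X_eq_comap_constantCoeff q).symm
  exact ⟨hker ▸ RingHom.ker_isPrime φ, hlies,
    ⟨(Ideal.quotEquivOfEq hker).trans
      (RingHom.quotientKerEquivOfSurjective (coeffZeroMod_surjective _))⟩,
    fun P _ hP hQP => Ideal.eq_of_le_of_comap_eq _ hsurj hQP (hP.trans hlies.symm)⟩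

/-- Let `A` be a domain, `p ⊆ q` primes of `A`, and `R` the symbolic Rees algebra
of `p`. Then `Q := (q,t⁻¹) ⊕ pt ⊕ p^(2)t² ⊕ ⋯` (the set of elements of `R` whose degree-zero
coefficient lies in `q`) is a prime ideal of `R` lying over `(q,t⁻¹)` in `A[t⁻¹]`, with
`R/Q ≅ A/q`, and `Q` is maximal among primes of `R` lying over `(q,t⁻¹)`. -/
theorem statement11 (A : Type*) [CommRing A] [IsDomain A] (p q : Ideal A)
    [p.IsPrime] [q.IsPrime] (hpq : p ≤ q)
    (ti : ↥(symbolicReesAlgebra A p))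
    (hti : (ti : LaurentPolynomial A) = T (-1))
    (Q : Ideal ↥(symbolicReesAlgebra A p))
    (hQ : ∀ f : ↥(symbolicReesAlgebra A p),
      f ∈ Q ↔ (AddMonoidAlgebra.coeff (f : LaurentPolynomial A) : ℤ →₀ A) 0 ∈ q) :
    Q.IsPrime ∧
    Ideal.comap (Polynomial.aeval ti : Polynomial A →ₐ[A] ↥(symbolicReesAlgebra A p)) Q =
      Ideal.map Polynomial.C q ⊔ Ideal.span {Polynomial.X} ∧
    Nonempty ((↥(symbolicReesAlgebra A p) ⧸ Q) ≃+* A ⧸ q) ∧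
    (∀ P : Ideal ↥(symbolicReesAlgebra A p), P.IsPrime →
      Ideal.comap (Polynomial.aeval ti : Polynomial A →ₐ[A] ↥(symbolicReesAlgebra A p)) P =
        Ideal.map Polynomial.C q ⊔ Ideal.span {Polynomial.X} →
      Q ≤ P → P = Q) :=
  statement11_general A p q hpq ti hti Q hQ
end
end

section
/- Let A be a domain, p, q primes of A, and R the symbolic Rees algebra of p. Then q[t⁻¹,t] ∩ R = q[t⁻¹] ⊕ (p∩q)t ⊕ (p^(2)∩q)t² ⊕ ⋯ is the unique prime ideal of R lying over q[t⁻¹] in A[t⁻¹]. -/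
noncomputable section

open LaurentPolynomial

/-!
Every element `f` of `R ⊆ A[t, t⁻¹]` becomes a polynomial in `t⁻¹` after multiplication by a
power of `t⁻¹`, and `t⁻¹` lies in no prime of `R` lying over `q[t⁻¹]` (as `t⁻¹ ∉ q[t⁻¹]`).
Hence a prime `P` of `R` over `q[t⁻¹]` is determined by its contraction: `f ∈ P` iff
`f t⁻ⁿ ∈ P ∩ A[t⁻¹] = q[t⁻¹]`. The ideal of elements of `R` with all coefficients in `q` is the
contraction of `q[t, t⁻¹]`, the kernel of `A[t, t⁻¹] → (A ⧸ q)[t, t⁻¹]`, hence prime, and it lies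
over `q[t⁻¹]`.
-/

open Polynomial (X aeval toLaurent toLaurentAlg)
open scoped Polynomial

theorem Ideal.le_of_comap_le_of_forall_mul_pow_eq {R S F : Type*} [CommSemiring R]
    [CommSemiring S] [FunLike F R S] [RingHomClass F R S] (φ : F) {s : S}
    (hs : ∀ x : S, ∃ (n : ℕ) (r : R), x * s ^ n = φ r) {P P' : Ideal S} [P'.IsPrime]
    (hsP' : s ∉ P') (h : P.comap φ ≤ P'.comap φ) : P ≤ P' := by
  intro x hx
  obtain ⟨n, r, hr⟩ := hs x
  have hrP' : x * s ^ n ∈ P' := hr ▸ h (show φ r ∈ P from hr ▸ P.mul_mem_right _ hx)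
  exact (Ideal.IsPrime.mem_or_mem ‹_› hrP').resolve_right fun hsn =>
    hsP' (Ideal.IsPrime.mem_of_pow_mem ‹_› n hsn)

theorem Ideal.eq_of_comap_eq_of_forall_mul_pow_eq {R S F : Type*} [CommSemiring R]
    [CommSemiring S] [FunLike F R S] [RingHomClass F R S] (φ : F) {s : S}
    (hs : ∀ x : S, ∃ (n : ℕ) (r : R), x * s ^ n = φ r) {P P' : Ideal S} [P.IsPrime] [P'.IsPrime]
    (hsP : s ∉ P) (hsP' : s ∉ P') (h : P.comap φ = P'.comap φ) : P = P' :=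
  le_antisymm (le_of_comap_le_of_forall_mul_pow_eq φ hs hsP' h.le)
    (le_of_comap_le_of_forall_mul_pow_eq φ hs hsP h.ge)

theorem Polynomial.X_notMem_map_C {R : Type*} [CommRing R] {q : Ideal R} (hq : q ≠ ⊤) :
    (X : R[X]) ∉ Ideal.map Polynomial.C q := by
  rw [Ideal.mem_map_C_iff]
  intro h
  exact hq (q.eq_top_of_isUnit_mem (by simpa using h 1) isUnit_one)

theorem Polynomial.notMem_of_comap_aeval_eq_map_C {R B : Type*} [CommRing R] [CommRing B]
    [Algebra R B] {q : Ideal R} (hq : q ≠ ⊤) {s : B} {P : Ideal B}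
    (hP : P.comap (aeval (R := R) s) = Ideal.map Polynomial.C q) : s ∉ P := by
  intro hs
  refine X_notMem_map_C hq ?_
  rw [← hP, Ideal.mem_comap, aeval_X]
  exact hs

namespace LaurentPolynomial

variable {A : Type*} [CommRing A]

lemma coeff_toLaurent_apply (g : A[X]) (n : ℤ) :
    (toLaurent g).coeff n = if 0 ≤ n then g.coeff n.toNat else 0 := by
  rw [coeff_toLaurent]
  split_ifs with h
  · conv_lhs => rw [← Int.toNat_of_nonneg h]
    exact Finsupp.mapDomain_apply Nat.castEmbedding.injective _ _
  · refine Finsupp.mapDomain_of_notMem_range _ _ ?_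
    rintro ⟨k, rfl⟩
    exact h (Int.natCast_nonneg k)

lemma aeval_T_neg_one (g : A[X]) : aeval (T (-1) : A[T;T⁻¹]) g = invert (toLaurent g) := by
  have : aeval (T (-1) : A[T;T⁻¹]) = (invert (R := A)).toAlgHom.comp toLaurentAlg :=
    Polynomial.algHom_ext (by simp)
  rw [this]
  rfl

lemma exists_mul_T_neg_one_pow_eq_aeval (f : A[T;T⁻¹]) :
    ∃ (n : ℕ) (g : A[X]), f * T (-1) ^ n = aeval (T (-1)) g := by
  obtain ⟨n, g, hg⟩ := exists_T_pow (invert f)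
  refine ⟨n, g, ?_⟩
  rw [aeval_T_neg_one, hg, map_mul, involutive_invert, invert_T, T_pow]
  simp

/-- The extension `q[t, t⁻¹]` of `q`. -/
def coeffIdeal (q : Ideal A) : Ideal A[T;T⁻¹] :=
  RingHom.ker (AddMonoidAlgebra.mapRingHom ℤ (Ideal.Quotient.mk q))

lemma mem_coeffIdeal {q : Ideal A} {f : A[T;T⁻¹]} : f ∈ coeffIdeal q ↔ ∀ n, f.coeff n ∈ q := by
  rw [coeffIdeal, RingHom.mem_ker]
  constructor
  · intro h n
    have := congrArg (fun g => AddMonoidAlgebra.coeff g n) h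
    simpa [Ideal.Quotient.eq_zero_iff_mem] using this
  · intro h
    ext n
    simpa [Ideal.Quotient.eq_zero_iff_mem] using h n

instance (q : Ideal A) [q.IsPrime] : (coeffIdeal q).IsPrime :=
  haveI : IsDomain (A ⧸ q)[T;T⁻¹] := NoZeroDivisors.to_isDomain _
  RingHom.ker_isPrime _

lemma invert_mem_coeffIdeal {q : Ideal A} {f : A[T;T⁻¹]} :
    invert f ∈ coeffIdeal q ↔ f ∈ coeffIdeal q := by
  simp only [mem_coeffIdeal, invert_apply]
  exact ⟨fun h n => neg_neg n ▸ h (-n), fun h n => h (-n)⟩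

lemma toLaurent_mem_coeffIdeal {q : Ideal A} {g : A[X]} :
    toLaurent g ∈ coeffIdeal q ↔ g ∈ Ideal.map Polynomial.C q := by
  simp only [mem_coeffIdeal, Ideal.mem_map_C_iff, coeff_toLaurent_apply]
  refine ⟨fun h k => by simpa using h k, fun h n => ?_⟩
  split_ifs
  · exact h _
  · exact q.zero_mem

section Subalgebra

variable (S : Subalgebra A A[T;T⁻¹]) {ti : S}

lemma coe_aeval_eq_invert_toLaurent (hti : (ti : A[T;T⁻¹]) = T (-1)) (g : A[X]) :
    (aeval ti g : A[T;T⁻¹]) = invert (toLaurent g) := by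
  rw [← aeval_T_neg_one, ← hti]
  exact (Polynomial.aeval_algHom_apply S.val ti g).symm

lemma exists_mul_pow_eq_aeval (hti : (ti : A[T;T⁻¹]) = T (-1)) (f : S) :
    ∃ (n : ℕ) (g : A[X]), f * ti ^ n = aeval ti g := by
  obtain ⟨n, g, hg⟩ := exists_mul_T_neg_one_pow_eq_aeval (f : A[T;T⁻¹])
  refine ⟨n, g, Subtype.ext ?_⟩
  rw [coe_aeval_eq_invert_toLaurent S hti, ← aeval_T_neg_one, ← hg]
  push_cast
  rw [hti]

lemma comap_aeval_comap_coeffIdeal (hti : (ti : A[T;T⁻¹]) = T (-1)) (q : Ideal A) :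
    ((coeffIdeal q).comap S.val).comap (aeval ti) = Ideal.map Polynomial.C q := by
  ext g
  rw [Ideal.mem_comap, Ideal.mem_comap, Subalgebra.coe_val, coe_aeval_eq_invert_toLaurent S hti,
    invert_mem_coeffIdeal, toLaurent_mem_coeffIdeal]

end Subalgebra

end LaurentPolynomial

open LaurentPolynomial Polynomial in
theorem statement12_general (A : Type*) [CommRing A] (p q : Ideal A)
    [p.IsPrime] [q.IsPrime]
    (ti : ↥(symbolicReesAlgebra A p))
    (hti : (ti : LaurentPolynomial A) = T (-1))
    (Q : Ideal ↥(symbolicReesAlgebra A p))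
    (hQ : ∀ f : ↥(symbolicReesAlgebra A p),
      f ∈ Q ↔ ∀ n : ℤ, (f : LaurentPolynomial A).coeff n ∈ q) :
    Q.IsPrime ∧
    Ideal.comap (Polynomial.aeval ti : Polynomial A →ₐ[A] ↥(symbolicReesAlgebra A p)) Q =
      Ideal.map Polynomial.C q ∧
    (∀ P : Ideal ↥(symbolicReesAlgebra A p), P.IsPrime →
      Ideal.comap (Polynomial.aeval ti : Polynomial A →ₐ[A] ↥(symbolicReesAlgebra A p)) P =
        Ideal.map Polynomial.C q →
      P = Q) := by
  have hQ_eq : Q = (coeffIdeal q).comap (symbolicReesAlgebra A p).val :=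
    Ideal.ext fun f => (hQ f).trans mem_coeffIdeal.symm
  have hQ_comap : Q.comap (aeval ti) = Ideal.map Polynomial.C q :=
    hQ_eq ▸ comap_aeval_comap_coeffIdeal _ hti q
  have hq : q ≠ ⊤ := Ideal.IsPrime.ne_top ‹_›
  have hQ_prime : Q.IsPrime := hQ_eq ▸ inferInstance
  refine ⟨hQ_prime, hQ_comap, fun P _ hP => ?_⟩
  exact Ideal.eq_of_comap_eq_of_forall_mul_pow_eq (aeval ti) (exists_mul_pow_eq_aeval _ hti)
    (notMem_of_comap_aeval_eq_map_C hq hP) (notMem_of_comap_aeval_eq_map_C hq hQ_comap)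
    (hP.trans hQ_comap.symm)

/-- Let `A` be a domain, `p, q` primes of `A`, and `R` the symbolic Rees algebra
of `p`. Then `q[t⁻¹,t] ∩ R = q[t⁻¹] ⊕ (p∩q)t ⊕ (p^(2)∩q)t² ⊕ ⋯` (the set of elements of `R`
all of whose coefficients lie in `q`) is the unique prime ideal of `R` lying over `q[t⁻¹]`
in `A[t⁻¹]`. -/
theorem statement12 (A : Type*) [CommRing A] [IsDomain A] (p q : Ideal A)
    [p.IsPrime] [q.IsPrime]
    (ti : ↥(symbolicReesAlgebra A p))
    (hti : (ti : LaurentPolynomial A) = T (-1))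
    (Q : Ideal ↥(symbolicReesAlgebra A p))
    (hQ : ∀ f : ↥(symbolicReesAlgebra A p),
      f ∈ Q ↔ ∀ n : ℤ, (f : LaurentPolynomial A).coeff n ∈ q) :
    Q.IsPrime ∧
    Ideal.comap (Polynomial.aeval ti : Polynomial A →ₐ[A] ↥(symbolicReesAlgebra A p)) Q =
      Ideal.map Polynomial.C q ∧
    (∀ P : Ideal ↥(symbolicReesAlgebra A p), P.IsPrime →
      Ideal.comap (Polynomial.aeval ti : Polynomial A →ₐ[A] ↥(symbolicReesAlgebra A p)) P =
        Ideal.map Polynomial.C q →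
      P = Q) :=
  statement12_general A p q ti hti Q hQ
end
end
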